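/- Let X ≥ 0 be a nonnegative random variable, let n ≥ 0 be an integer and let s ∈ (n, n+1). Then E[X^s] = ((−1)^{n+1}/Γ(−s)) · ∫₀^∞ E[q_n(λX)]/λ^{s+1} dλ, where both sides may simultaneously be infinite (the integrand is nonnegative, so the identity holds as an equality in [0,∞]). -/

import Mathlib

open MeasureTheory Real Set Filter

/-- `q_n(λ) = (-1)^(n+1) (e^{-λ} - ∑_{k=0}^n (-1)^k λ^k / k!)`. -/
noncomputable def qAux (n : ℕ) (x : ℝ) : ℝ :=
  (-1 : ℝ) ^ (n + 1) *
    (Real.exp (-x) - ∑ k ∈ Finset.range (n + 1), (-1 : ℝ) ^ k * x ^ k / (Nat.factorial k))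

noncomputable def Qf : ℕ → ℝ → ℝ
  | 0 => fun x => Real.exp (-x)
  | (m+1) => fun x => qAux m x

lemma qAux_zero (m : ℕ) : qAux m 0 = 0 := by
  have h : ∑ k ∈ Finset.range (m+1), (-1:ℝ)^k * 0^k / (Nat.factorial k) = 1 := by
    rw [Finset.sum_eq_single 0]
    · simp
    · intro b _ hb; simp [zero_pow hb]
    · intro h; exact absurd (Finset.mem_range.2 (Nat.succ_pos m)) h
  simp [qAux, h]

lemma continuous_Qf (m : ℕ) : Continuous (Qf m) := by
  cases m with
  | zero => exact Real.continuous_exp.comp continuous_neg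
  | succ j =>
    show Continuous fun x => qAux j x
    unfold qAux
    exact continuous_const.mul ((Real.continuous_exp.comp continuous_neg).sub
      (continuous_finset_sum _ fun k _ => (continuous_const.mul (continuous_pow k)).div_const _))

lemma hasDerivAt_qAux (m : ℕ) (x : ℝ) : HasDerivAt (fun y => qAux m y) (Qf m x) x := by
  have hexp : HasDerivAt (fun y : ℝ => Real.exp (-y)) (-Real.exp (-x)) x := by
    simpa using (hasDerivAt_neg x).exp
  have hsum : HasDerivAt
      (fun y : ℝ => ∑ k ∈ Finset.range (m+1), (-1:ℝ)^k * y^k / (Nat.factorial k))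
      (∑ k ∈ Finset.range (m+1), (-1:ℝ)^k * ((k:ℝ) * x^(k-1)) / (Nat.factorial k)) x := by
    apply HasDerivAt.fun_sum
    intro k _
    exact ((hasDerivAt_pow k x).const_mul ((-1:ℝ)^k)).div_const _
  have h := (hexp.sub hsum).const_mul ((-1:ℝ)^(m+1))
  have hfun : (fun y => qAux m y) = fun y => (-1:ℝ)^(m+1) *
      (Real.exp (-y) - ∑ k ∈ Finset.range (m+1), (-1:ℝ)^k * y^k / (Nat.factorial k)) := rfl
  rw [hfun]
  refine h.congr_deriv (Eq.symm ?_)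
  cases m with
  | zero =>
    simp [Qf]
  | succ j =>
    have hterm : ∀ k : ℕ, (-1:ℝ)^(k+1) * (((k+1:ℕ):ℝ) * x^((k+1)-1)) / (Nat.factorial (k+1) : ℝ)
        = -((-1:ℝ)^k * x^k / (Nat.factorial k : ℝ)) := by
      intro k
      rw [Nat.add_sub_cancel, Nat.factorial_succ, pow_succ]
      have hk : ((Nat.factorial k : ℝ)) ≠ 0 := Nat.cast_ne_zero.2 k.factorial_ne_zero
      have hk1 : ((k:ℝ)+1) ≠ 0 := by positivity
      push_cast
      field_simp
    rw [Finset.sum_range_succ']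
    simp only [hterm]
    rw [Finset.sum_neg_distrib]
    show Qf (j+1) x = _
    simp only [Qf, qAux]
    rw [pow_succ ((-1:ℝ)) (j+1)]
    push_cast
    ring

lemma Qf_succ_eq (m : ℕ) (x : ℝ) : Qf (m+1) x = ∫ t in (0:ℝ)..x, Qf m t := by
  have h := intervalIntegral.integral_eq_sub_of_hasDerivAt
    (f := fun y => qAux m y) (f' := Qf m) (a := (0:ℝ)) (b := x)
    (fun t _ => hasDerivAt_qAux m t) ((continuous_Qf m).intervalIntegrable 0 x)
  rw [h, qAux_zero, sub_zero]; rfl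

lemma Qf_nonneg (m : ℕ) : ∀ x : ℝ, 0 ≤ x → 0 ≤ Qf m x := by
  induction m with
  | zero => intro x _; exact (Real.exp_pos _).le
  | succ j ih =>
    intro x hx
    rw [Qf_succ_eq]
    exact intervalIntegral.integral_nonneg hx (fun t ht => ih t ht.1)

lemma gamma_sign : ∀ (k : ℕ) (s : ℝ), (k:ℝ) - 1 < s → s < k → 0 < (-1:ℝ)^k * Real.Gamma (-s) := by
  intro k
  induction k with
  | zero =>
    intro s h1 h2
    simpa using Real.Gamma_pos_of_pos (by push_cast at h2; simpa using neg_pos.2 h2)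
  | succ j ih =>
    intro s h1 h2
    have hs0 : 0 < s := lt_of_le_of_lt (by exact_mod_cast Nat.cast_nonneg j) (by push_cast at h1 ⊢; linarith)
    have hns : -s ≠ 0 := by linarith
    have hrec : Real.Gamma (-s + 1) = -s * Real.Gamma (-s) := Real.Gamma_add_one hns
    have ihs := ih (s - 1) (by push_cast at h1 ⊢; linarith) (by push_cast at h2 ⊢; linarith)
    have : -(s-1) = -s + 1 := by ring
    rw [this, hrec] at ihs
    have : (0:ℝ) < s * ((-1:ℝ)^(j+1) * Real.Gamma (-s)) := by
      rw [pow_succ]; nlinarith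
    nlinarith

lemma key : ∀ (k : ℕ) (s : ℝ), (k:ℝ) - 1 < s → s < k →
    ∫⁻ u in Ioi (0:ℝ), ENNReal.ofReal (Qf k u) / ENNReal.ofReal (u ^ (s+1))
      = ENNReal.ofReal ((-1:ℝ)^k * Real.Gamma (-s)) := by
  intro k
  induction k with
  | zero =>
    intro s h1 h2
    push_cast at h1 h2
    have hs : 0 < -s := by linarith
    have hcong : ∀ u ∈ Ioi (0:ℝ), ENNReal.ofReal (Qf 0 u) / ENNReal.ofReal (u ^ (s+1))
        = ENNReal.ofReal (Real.exp (-u) * u ^ (-s - 1)) := by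
      intro u hu
      have hu : (0:ℝ) < u := hu
      rw [show Qf 0 u = Real.exp (-u) from rfl,
        ← ENNReal.ofReal_div_of_pos (Real.rpow_pos_of_pos hu _)]
      congr 1
      rw [div_eq_mul_inv, ← Real.rpow_neg hu.le, show -(s+1) = -s - 1 by ring]
    rw [setLIntegral_congr_fun measurableSet_Ioi hcong,
      ← ofReal_integral_eq_lintegral_ofReal (Real.GammaIntegral_convergent hs)
        ((ae_restrict_iff' measurableSet_Ioi).2 (ae_of_all _ fun x hx => mul_nonneg (Real.exp_nonneg _) (Real.rpow_nonneg (le_of_lt hx) _))),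
      ← Real.Gamma_eq_integral hs]
    norm_num
  | succ j ih =>
    intro s h1 h2
    push_cast at h1 h2
    have hj0 : (0:ℝ) ≤ j := Nat.cast_nonneg j
    have hs0 : 0 < s := by linarith
    have hrep : ∀ u ∈ Ioi (0:ℝ), ENNReal.ofReal (Qf (j+1) u)
        = ∫⁻ t in Ioc 0 u, ENNReal.ofReal (Qf j t) := by
      intro u hu
      have h1' : Qf (j+1) u = ∫ t in Ioc (0:ℝ) u, Qf j t := by
        rw [Qf_succ_eq, intervalIntegral.integral_of_le (le_of_lt hu)]
      rw [h1', ofReal_integral_eq_lintegral_ofReal ((continuous_Qf j).integrableOn_Ioc)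
        ((ae_restrict_iff' measurableSet_Ioc).2 (ae_of_all _ fun t ht => Qf_nonneg j t ht.1.le))]
    set F : ℝ × ℝ → ENNReal := fun p =>
      (Ioc 0 p.1).indicator (fun t => ENNReal.ofReal (Qf j t)) p.2
        * (ENNReal.ofReal (p.1 ^ (s+1)))⁻¹ with hF
    have hFmeas : Measurable F := by
      apply Measurable.mul
      · have heq : (fun p : ℝ × ℝ => (Ioc 0 p.1).indicator (fun t => ENNReal.ofReal (Qf j t)) p.2)
            = Set.indicator {p : ℝ × ℝ | 0 < p.2 ∧ p.2 ≤ p.1}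
                (fun p => ENNReal.ofReal (Qf j p.2)) := by
          ext p
          by_cases h : p.2 ∈ Ioc 0 p.1
          · rw [Set.indicator_of_mem h, Set.indicator_of_mem (by exact h)]
          · rw [Set.indicator_of_notMem h, Set.indicator_of_notMem (by exact h)]
        rw [heq]
        exact Measurable.indicator
          (ENNReal.measurable_ofReal.comp ((continuous_Qf j).measurable.comp measurable_snd))
          ((measurableSet_lt measurable_const measurable_snd).inter
            (measurableSet_le measurable_snd measurable_fst))
      · have : Measurable fun p : ℝ × ℝ => p.1 ^ (s+1) := by fun_prop
        exact (ENNReal.measurable_ofReal.comp this).inv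
    have hL : ∫⁻ u in Ioi (0:ℝ), ENNReal.ofReal (Qf (j+1) u) / ENNReal.ofReal (u ^ (s+1))
        = ∫⁻ u in Ioi (0:ℝ), ∫⁻ t, F (u, t) := by
      apply setLIntegral_congr_fun measurableSet_Ioi ?_
      intro u hu
      beta_reduce
      have hne : (ENNReal.ofReal (u ^ (s+1)))⁻¹ ≠ ⊤ := by
        exact ENNReal.inv_ne_top.mpr (ne_of_gt (ENNReal.ofReal_pos.2 (Real.rpow_pos_of_pos hu _)))
      rw [div_eq_mul_inv, hrep u hu, ← lintegral_indicator measurableSet_Ioc,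
        ← lintegral_mul_const' _ _ hne]
    have hswap : ∫⁻ u in Ioi (0:ℝ), ∫⁻ t, F (u, t) = ∫⁻ t, ∫⁻ u in Ioi (0:ℝ), F (u, t) :=
      lintegral_lintegral_swap hFmeas.aemeasurable
    have hinner : ∀ t : ℝ, ∫⁻ u in Ioi (0:ℝ), F (u, t)
        = (Ioi 0).indicator
            (fun t => ENNReal.ofReal (Qf j t) * ENNReal.ofReal (t ^ (-s) / s)) t := by
      intro t
      by_cases ht : 0 < t
      · have hFeq : ∀ u, F (u, t)
            = (Ici t).indicator
                (fun u => ENNReal.ofReal (Qf j t) * (ENNReal.ofReal (u ^ (s+1)))⁻¹) u := by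
          intro u
          by_cases h : t ≤ u
          · rw [Set.indicator_of_mem (show u ∈ Ici t from h), hF]
            simp only
            rw [Set.indicator_of_mem (show t ∈ Ioc 0 u from ⟨ht, h⟩)]
          · rw [Set.indicator_of_notMem (show u ∉ Ici t from h), hF]
            simp only
            rw [Set.indicator_of_notMem (show t ∉ Ioc 0 u from fun hc => h hc.2), zero_mul]
        simp only [hFeq]
        have hIt : Ici t ∩ Ioi (0:ℝ) = Ici t :=
          inter_eq_left.2 fun x hx => lt_of_lt_of_le ht hx
        rw [lintegral_indicator measurableSet_Ici, Measure.restrict_restrict measurableSet_Ici,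
          hIt, ← restrict_Ioi_eq_restrict_Ici,
          lintegral_const_mul' _ _ ENNReal.ofReal_ne_top,
          Set.indicator_of_mem (show t ∈ Ioi (0:ℝ) from ht)]
        congr 1
        have hcong2 : ∀ u ∈ Ioi t, (ENNReal.ofReal (u ^ (s+1)))⁻¹
            = ENNReal.ofReal (u ^ (-(s+1))) := by
          intro u hu
          have hu0 : 0 < u := ht.trans hu
          rw [Real.rpow_neg hu0.le, ENNReal.ofReal_inv_of_pos (Real.rpow_pos_of_pos hu0 _)]
        rw [setLIntegral_congr_fun measurableSet_Ioi hcong2,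
          ← ofReal_integral_eq_lintegral_ofReal (integrableOn_Ioi_rpow_of_lt (by linarith) ht)
            ((ae_restrict_iff' measurableSet_Ioi).2
              (ae_of_all _ fun x hx => Real.rpow_nonneg (le_of_lt (ht.trans hx)) _)),
          integral_Ioi_rpow_of_lt (by linarith) ht]
        congr 1
        rw [show -(s+1) + 1 = -s by ring]
        rw [neg_div, div_neg, neg_neg]
      · have hFeq : ∀ u, F (u, t) = 0 := by
          intro u
          rw [hF]
          simp only
          rw [Set.indicator_of_notMem (fun hc => ht hc.1), zero_mul]
        rw [Set.indicator_of_notMem (by simpa using ht)]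
        simp [hFeq]
    rw [hL, hswap]
    simp only [hinner]
    rw [lintegral_indicator measurableSet_Ioi]
    have hcong3 : ∀ t ∈ Ioi (0:ℝ), ENNReal.ofReal (Qf j t) * ENNReal.ofReal (t ^ (-s) / s)
        = (ENNReal.ofReal (Qf j t) / ENNReal.ofReal (t ^ ((s-1)+1))) * ENNReal.ofReal s⁻¹ := by
      intro t ht
      rw [show (s-1)+1 = s by ring, div_eq_mul_inv _ (ENNReal.ofReal _), mul_assoc]
      congr 1
      rw [div_eq_mul_inv _ s, ENNReal.ofReal_mul (Real.rpow_nonneg (le_of_lt ht) _)]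
      congr 1
      rw [Real.rpow_neg (le_of_lt ht), ENNReal.ofReal_inv_of_pos (Real.rpow_pos_of_pos ht _)]
    rw [setLIntegral_congr_fun measurableSet_Ioi hcong3,
      lintegral_mul_const' _ _ ENNReal.ofReal_ne_top,
      ih (s-1) (by push_cast; linarith) (by push_cast; linarith),
      ← ENNReal.ofReal_mul (le_of_lt (gamma_sign j (s-1) (by push_cast; linarith)
        (by push_cast; linarith)))]
    congr 1
    have hG : Real.Gamma (-(s-1)) = -s * Real.Gamma (-s) := by
      rw [show -(s-1) = -s + 1 by ring]
      exact Real.Gamma_add_one (by linarith)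
    rw [hG, pow_succ]
    field_simp

lemma Qf_succ_def (m : ℕ) (x : ℝ) : Qf (m+1) x = qAux m x := rfl

lemma scale (n : ℕ) (s : ℝ) (hs : 0 < s) {x : ℝ} (hx : 0 < x) :
    ∫⁻ l in Ioi (0:ℝ), ENNReal.ofReal (qAux n (l * x)) / ENNReal.ofReal (l ^ (s+1))
      = ENNReal.ofReal (x ^ s)
        * ∫⁻ u in Ioi (0:ℝ), ENNReal.ofReal (qAux n u) / ENNReal.ofReal (u ^ (s+1)) := by
  set g : ℝ → ENNReal := fun u => ENNReal.ofReal (qAux n u / u ^ (s+1)) with hg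
  have hqcont : Continuous fun u : ℝ => qAux n u := continuous_Qf (n+1)
  have hgmeas : Measurable g := by
    apply ENNReal.measurable_ofReal.comp
    apply Measurable.div hqcont.measurable
    fun_prop
  have hstep1 : ∀ l ∈ Ioi (0:ℝ),
      ENNReal.ofReal (qAux n (l * x)) / ENNReal.ofReal (l ^ (s+1))
        = ENNReal.ofReal (x ^ (s+1)) * g (x * l) := by
    intro l hl
    have hl : (0:ℝ) < l := hl
    rw [← ENNReal.ofReal_div_of_pos (Real.rpow_pos_of_pos hl _), hg]
    simp only
    rw [← ENNReal.ofReal_mul (Real.rpow_nonneg hx.le _)]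
    congr 1
    rw [mul_comm l x, Real.mul_rpow hx.le hl.le]
    have h1 : x ^ (s+1) ≠ 0 := ne_of_gt (Real.rpow_pos_of_pos hx _)
    have h2 : l ^ (s+1) ≠ 0 := ne_of_gt (Real.rpow_pos_of_pos hl _)
    field_simp
  have hpre : (fun l : ℝ => x * l) ⁻¹' (Ioi 0) = Ioi 0 := by
    ext l
    simp only [mem_preimage, mem_Ioi]
    constructor
    · intro h; by_contra hc; push_neg at hc; nlinarith
    · intro h; positivity
  have hmap : Measure.map (fun l : ℝ => x * l) (volume.restrict (Ioi 0))
      = (ENNReal.ofReal |x⁻¹|) • (volume.restrict (Ioi (0:ℝ))) := by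
    conv_lhs => rw [← hpre]
    rw [← Measure.restrict_map (measurable_const_mul x) measurableSet_Ioi,
      Real.map_volume_mul_left (ne_of_gt hx), Measure.restrict_smul]
  have hsub : ∫⁻ l in Ioi (0:ℝ), g (x * l) = ENNReal.ofReal x⁻¹ * ∫⁻ u in Ioi (0:ℝ), g u := by
    rw [← lintegral_map hgmeas (measurable_const_mul x), hmap, lintegral_smul_measure,
      abs_of_pos (inv_pos.2 hx), smul_eq_mul]
  rw [setLIntegral_congr_fun measurableSet_Ioi hstep1,
    lintegral_const_mul' _ _ ENNReal.ofReal_ne_top, hsub, ← mul_assoc,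
    ← ENNReal.ofReal_mul (Real.rpow_nonneg hx.le _),
    show x ^ (s+1) * x⁻¹ = x ^ s by rw [Real.rpow_add_one (ne_of_gt hx)]; field_simp]
  congr 1
  apply setLIntegral_congr_fun measurableSet_Ioi ?_
  intro u hu
  rw [hg]
  simp only
  rw [ENNReal.ofReal_div_of_pos (Real.rpow_pos_of_pos hu _)]

theorem stmt10 {Ω : Type*} [MeasurableSpace Ω] (μ : Measure Ω) [IsProbabilityMeasure μ]
    (X : Ω → ℝ) (hX : Measurable X) (hXnn : ∀ ω, 0 ≤ X ω) (n : ℕ) (s : ℝ)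
    (hs1 : (n : ℝ) < s) (hs2 : s < n + 1) :
    ∫⁻ ω, ENNReal.ofReal (X ω ^ s) ∂μ
      = ENNReal.ofReal ((-1 : ℝ) ^ (n + 1) / Real.Gamma (-s))
        * ∫⁻ l in Ioi (0 : ℝ),
            (∫⁻ ω, ENNReal.ofReal (qAux n (l * X ω)) ∂μ) / ENNReal.ofReal (l ^ (s + 1)) := by
  have hs0 : 0 < s := lt_of_le_of_lt (Nat.cast_nonneg n) hs1
  have hsign := gamma_sign (n+1) s (by push_cast; linarith) (by push_cast; linarith)
  have hGne : Real.Gamma (-s) ≠ 0 := by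
    intro h; rw [h, mul_zero] at hsign; exact lt_irrefl 0 hsign
  have hKey := key (n+1) s (by push_cast; linarith) (by push_cast; linarith)
  have hKey' : ∫⁻ u in Ioi (0:ℝ), ENNReal.ofReal (qAux n u) / ENNReal.ofReal (u ^ (s+1))
      = ENNReal.ofReal ((-1:ℝ)^(n+1) * Real.Gamma (-s)) := by
    rw [← hKey]
    exact setLIntegral_congr_fun measurableSet_Ioi
      (fun u _ => by simp only [Qf_succ_def])
  set I := ENNReal.ofReal ((-1:ℝ)^(n+1) * Real.Gamma (-s)) with hI
  have hmeasq : Measurable fun p : ℝ × Ω =>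
      ENNReal.ofReal (qAux n (p.1 * X p.2)) * (ENNReal.ofReal (p.1 ^ (s+1)))⁻¹ := by
    apply Measurable.mul
    · exact ENNReal.measurable_ofReal.comp ((continuous_Qf (n+1)).measurable.comp
        (measurable_fst.mul (hX.comp measurable_snd)))
    · have : Measurable fun p : ℝ × Ω => p.1 ^ (s+1) := by fun_prop
      exact (ENNReal.measurable_ofReal.comp this).inv
  have step1 : ∫⁻ l in Ioi (0:ℝ),
        (∫⁻ ω, ENNReal.ofReal (qAux n (l * X ω)) ∂μ) / ENNReal.ofReal (l ^ (s+1))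
      = ∫⁻ l in Ioi (0:ℝ), ∫⁻ ω,
          ENNReal.ofReal (qAux n (l * X ω)) * (ENNReal.ofReal (l ^ (s+1)))⁻¹ ∂μ := by
    apply setLIntegral_congr_fun measurableSet_Ioi ?_
    intro l hl
    beta_reduce
    rw [div_eq_mul_inv, ← lintegral_mul_const' _ _
      (ENNReal.inv_ne_top.mpr (ne_of_gt (ENNReal.ofReal_pos.2 (Real.rpow_pos_of_pos hl _))))]
  have step2 : ∫⁻ l in Ioi (0:ℝ), ∫⁻ ω,
        ENNReal.ofReal (qAux n (l * X ω)) * (ENNReal.ofReal (l ^ (s+1)))⁻¹ ∂μ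
      = ∫⁻ ω, (∫⁻ l in Ioi (0:ℝ),
          ENNReal.ofReal (qAux n (l * X ω)) * (ENNReal.ofReal (l ^ (s+1)))⁻¹) ∂μ :=
    lintegral_lintegral_swap hmeasq.aemeasurable
  have step3 : ∀ ω, (∫⁻ l in Ioi (0:ℝ),
        ENNReal.ofReal (qAux n (l * X ω)) * (ENNReal.ofReal (l ^ (s+1)))⁻¹)
      = ENNReal.ofReal (X ω ^ s) * I := by
    intro ω
    rcases lt_or_eq_of_le (hXnn ω) with hx | hx
    · have h := scale n s hs0 hx
      rw [← hKey', ← h]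
      exact setLIntegral_congr_fun measurableSet_Ioi
        (fun l _ => by simp only [div_eq_mul_inv])
    · rw [← hx]
      have hq0 : ∀ l : ℝ, qAux n (l * 0) = 0 := fun l => by rw [mul_zero, qAux_zero]
      simp [hq0, qAux_zero, Real.zero_rpow (ne_of_gt hs0)]
  have hcnn : (0:ℝ) ≤ (-1:ℝ)^(n+1) / Real.Gamma (-s) := by
    have heq : (-1:ℝ)^(n+1) / Real.Gamma (-s)
        = ((-1:ℝ)^(n+1) * Real.Gamma (-s)) / (Real.Gamma (-s))^2 := by
      field_simp
    rw [heq]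
    exact div_nonneg hsign.le (sq_nonneg _)
  have hc1 : ENNReal.ofReal ((-1:ℝ)^(n+1) / Real.Gamma (-s))
      * ENNReal.ofReal ((-1:ℝ)^(n+1) * Real.Gamma (-s)) = 1 := by
    rw [← ENNReal.ofReal_mul hcnn]
    have hsq : ((-1:ℝ)^(n+1))^2 = 1 := by
      rw [← pow_mul, mul_comm, pow_mul]
      norm_num
    have hprod : ((-1:ℝ)^(n+1) / Real.Gamma (-s)) * ((-1:ℝ)^(n+1) * Real.Gamma (-s)) = 1 := by
      calc ((-1:ℝ)^(n+1) / Real.Gamma (-s)) * ((-1:ℝ)^(n+1) * Real.Gamma (-s))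
          = ((-1:ℝ)^(n+1))^2 * (Real.Gamma (-s) / Real.Gamma (-s)) := by ring
        _ = 1 := by rw [hsq, div_self hGne, one_mul]
    rw [hprod, ENNReal.ofReal_one]
  rw [step1, step2, lintegral_congr step3, lintegral_mul_const' I _ ENNReal.ofReal_ne_top,
    ← mul_assoc, mul_comm (ENNReal.ofReal ((-1:ℝ)^(n+1) / Real.Gamma (-s))) _, mul_assoc, hI,
    hc1, mul_one]
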